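/- Let X*(t) = sup_{s∈[0,t]} X(s) = B*(S(t)), where B*(τ) = sup_{s∈[0,τ]} B(s), and let S_{1/2}(t) = inf{τ > 0 : B*(τ) > t}. Then for every t ≥ 0, X*(t) = inf{ τ > 0 : T( S_{1/2}(τ) ) > t } almost surely; i.e., the running supremum of X is the inverse of the subordinator T ∘ S_{1/2}. -/

import Mathlib

open MeasureTheory ProbabilityTheory Filter Set

noncomputable section

/-- The (generalized, right-continuous) inverse of an increasing process `T`:
`S(t) = inf {τ > 0 : T(τ) > t}` (the inverse subordinator / first-passage time process). -/
def invSub {Ω : Type*} (T : ℝ → Ω → ℝ) (t : ℝ) (ω : Ω) : ℝ :=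
  sInf {τ : ℝ | 0 < τ ∧ t < T τ ω}

/-- The Bernstein function (Laplace exponent) associated with the Lévy measure `ν`
(zero drift): `f(u) = ∫_(0,∞) (1 - e^{-u x}) ν(dx)`. -/
def levyExponent (ν : Measure ℝ) (u : ℝ) : ℝ :=
  ∫ x in Set.Ioi (0 : ℝ), (1 - Real.exp (-u * x)) ∂ν

/-- `ν` is a Lévy measure of a subordinator, supported in `(0,∞)` with
`∫ min(1,x) ν(dx) < ∞`, and with infinite total mass `ν(0,∞) = ∞`. -/
def IsLevyMeasure (ν : Measure ℝ) : Prop :=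
  ν (Set.Iic 0) = 0 ∧ ν (Set.Ioi 0) = ⊤ ∧
    ∫⁻ x in Set.Ioi (0 : ℝ), ENNReal.ofReal (min 1 x) ∂ν ≠ ⊤

/-- An increasing Lévy process (subordinator): `T(0) = 0`, a.s. increasing càdlàg paths,
stationary and independent increments. -/
structure IsSubordinatorProc {Ω : Type*} [MeasurableSpace Ω] (P : Measure Ω)
    (T : ℝ → Ω → ℝ) : Prop where
  meas : ∀ t, Measurable (T t)
  start : ∀ᵐ ω ∂P, T 0 ω = 0
  mono : ∀ᵐ ω ∂P, MonotoneOn (fun t => T t ω) (Set.Ici 0)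
  rightCont : ∀ᵐ ω ∂P, ∀ t ∈ Set.Ici (0 : ℝ),
    ContinuousWithinAt (fun s => T s ω) (Set.Ici t) t
  leftLim : ∀ᵐ ω ∂P, ∀ t ∈ Set.Ioi (0 : ℝ), ∃ l : ℝ,
    Filter.Tendsto (fun s => T s ω) (nhdsWithin t (Set.Iio t)) (nhds l)
  statInc : ∀ s t : ℝ, 0 ≤ s → 0 ≤ t →
    P.map (fun ω => T (s + t) ω - T s ω) = P.map (T t)
  indepInc : ∀ n : ℕ, ∀ t : ℕ → ℝ, Monotone t → (∀ i, 0 ≤ t i) →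
    iIndepFun
      (fun (i : Fin n) ω => T (t (i + 1)) ω - T (t i) ω) P

/-- `T` has Laplace transform `E[exp(-u T(t))] = exp(-t f(u))`. -/
def HasLaplaceExponent {Ω : Type*} [MeasurableSpace Ω] (P : Measure Ω)
    (T : ℝ → Ω → ℝ) (f : ℝ → ℝ) : Prop :=
  ∀ t : ℝ, 0 ≤ t → ∀ u : ℝ, 0 < u →
    ∫ ω, Real.exp (-u * T t ω) ∂P = Real.exp (-t * f u)

/-- A standard one-dimensional Brownian motion: `B(0) = 0`, a.s. continuous paths,
independent increments, `B(t) - B(s) ~ N(0, t-s)`. -/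
structure IsBrownianMotion {Ω : Type*} [MeasurableSpace Ω] (P : Measure Ω)
    (B : ℝ → Ω → ℝ) : Prop where
  meas : ∀ t, Measurable (B t)
  start : ∀ᵐ ω ∂P, B 0 ω = 0
  cont : ∀ᵐ ω ∂P, Continuous fun t => B t ω
  gaussInc : ∀ s t : ℝ, 0 ≤ s → s ≤ t →
    P.map (fun ω => B t ω - B s ω) = gaussianReal 0 (Real.toNNReal (t - s))
  indepInc : ∀ n : ℕ, ∀ t : ℕ → ℝ, Monotone t → (∀ i, 0 ≤ t i) →
    iIndepFun
      (fun (i : Fin n) ω => B (t (i + 1)) ω - B (t i) ω) P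

/-- The running supremum `B*(τ) = sup_{s ∈ [0,τ]} B(s)` of a process `B`. -/
def runSup {Ω : Type*} (B : ℝ → Ω → ℝ) (τ : ℝ) (ω : Ω) : ℝ :=
  sSup ((fun s => B s ω) '' Set.Icc 0 τ)

open Topology
open scoped NNReal ENNReal

/-!
Fix a path and write `g = T(·, ω)`, `b = B(·, ω)`, `S_g(s) = inf {τ > 0 : s < g τ}` and `b*` for
the running supremum of `b`. Almost surely `g` starts at `0`, is right-continuous, eventually
exceeds `t`, and is strictly increasing: since `ν` has infinite mass the Laplace exponent tends to
infinity, so the Chernoff bound gives `T(r) > 0` a.s. for `r > 0`, and stationarity of the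
increments transfers this to `T(r) - T(q)`. Almost surely `b` is continuous, `b(0) = 0`, and `b*`
is unbounded: by Kolmogorov's 0-1 law for the unit increments the event `sup_n B(n) = ∞` has
probability 0 or 1, and by Gaussian scaling it has probability at least `P(N(0,1) > 1) > 0`.

For such paths `S_g` maps `[0, t]` onto `[0, S_g t]`, hence `X*(t) = b*(S_g t)`. As `b*` is
continuous and nondecreasing, the first-passage times are adjoint to their functions
(`S_g s ≤ σ ↔ s ≤ g σ` and `S_{b*} τ < σ ↔ τ < b* σ` on `[0, ∞)`), and these two relations show
that `b*(S_g t)` is exactly the first level `τ` with `t < g (S_{b*} τ)`.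
-/

-- Path-wise forms of `invSub` and `runSup`: `invSub T t ω = firstPassage (T · ω) t` and
-- `runSup B σ ω = runningSup (B · ω) σ` hold by `rfl`. When `g` never exceeds `s`, the infimum
-- is `sInf ∅ = 0`.
def firstPassage (g : ℝ → ℝ) (s : ℝ) : ℝ :=
  sInf {τ | 0 < τ ∧ s < g τ}

def runningSup (b : ℝ → ℝ) (σ : ℝ) : ℝ :=
  sSup (b '' Icc 0 σ)

section FirstPassage

variable {g : ℝ → ℝ} {s σ : ℝ}

lemma firstPassage_nonneg : 0 ≤ firstPassage g s :=
  Real.sInf_nonneg fun _ hτ => hτ.1.le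

lemma firstPassage_le (hσ : 0 < σ) (h : s < g σ) : firstPassage g s ≤ σ :=
  csInf_le ⟨0, fun _ hτ => hτ.1.le⟩ ⟨hσ, h⟩

lemma le_firstPassage (hne : ∃ τ, 0 < τ ∧ s < g τ) (h : ∀ τ, 0 < τ → s < g τ → σ ≤ τ) :
    σ ≤ firstPassage g s :=
  le_csInf hne fun τ hτ => h τ hτ.1 hτ.2

lemma firstPassage_mono {s' : ℝ} (hne : ∃ τ, 0 < τ ∧ s' < g τ) (h : s ≤ s') :
    firstPassage g s ≤ firstPassage g s' :=
  csInf_le_csInf ⟨0, fun _ hτ => hτ.1.le⟩ hne fun _ hτ => ⟨hτ.1, h.trans_lt hτ.2⟩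

lemma le_firstPassage_of_le (hg : MonotoneOn g (Ici 0)) (hne : ∃ τ, 0 < τ ∧ s < g τ)
    (hσ : 0 ≤ σ) (h : g σ ≤ s) : σ ≤ firstPassage g s :=
  le_firstPassage hne fun _ hτ hsτ => le_of_not_gt fun hτσ =>
    (hsτ.trans_le ((hg hτ.le hσ hτσ.le).trans h)).false

lemma firstPassage_le_of_le (hg : StrictMonoOn g (Ici 0)) (hσ : 0 ≤ σ) (h : s ≤ g σ) :
    firstPassage g s ≤ σ := by
  by_contra! hlt
  obtain ⟨σ', hσσ', hσ'⟩ := exists_between hlt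
  have hσ'pos : 0 < σ' := hσ.trans_lt hσσ'
  exact (firstPassage_le hσ'pos (h.trans_lt (hg hσ hσ'pos.le hσσ'))).not_gt hσ'

lemma le_apply_firstPassage (hg : ∀ τ ∈ Ici 0, ContinuousWithinAt g (Ici τ) τ)
    (hne : ∃ τ, 0 < τ ∧ s < g τ) : s ≤ g (firstPassage g s) := by
  by_contra! hlt
  have hbelow : ∀ᶠ x in 𝓝[≥] firstPassage g s, g x < s :=
    (hg _ firstPassage_nonneg).eventually (gt_mem_nhds hlt)
  have hfreq : ∃ᶠ x in 𝓝[≥] firstPassage g s, 0 < x ∧ s < g x :=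
    (isGLB_csInf hne ⟨0, fun _ hτ => hτ.1.le⟩).frequently_mem hne
  obtain ⟨x, ⟨-, hsx⟩, hxs⟩ := (hfreq.and_eventually hbelow).exists
  exact (hsx.trans hxs).false

lemma firstPassage_lt_of_lt (hc : ContinuousAt g σ) (h0 : g 0 ≤ s) (hσ : 0 ≤ σ)
    (h : s < g σ) : firstPassage g s < σ := by
  have hσpos : 0 < σ := hσ.lt_of_ne fun h' => (h0.trans_lt (h' ▸ h)).false
  have habove : ∀ᶠ x in 𝓝[<] σ, s < g x :=
    (hc.eventually (lt_mem_nhds h)).filter_mono nhdsWithin_le_nhds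
  obtain ⟨x, hsx, hx0, hxσ⟩ := (habove.and (Ioo_mem_nhdsLT hσpos)).exists
  exact (firstPassage_le hx0 hsx).trans_lt hxσ

end FirstPassage

section Inversion

variable {g : ℝ → ℝ} {t : ℝ}

lemma firstPassage_image_Icc (hg0 : g 0 = 0) (hg : StrictMonoOn g (Ici 0))
    (hne : ∃ τ, 0 < τ ∧ t < g τ) (ht : 0 ≤ t) :
    firstPassage g '' Icc 0 t = Icc 0 (firstPassage g t) := by
  refine Subset.antisymm ?_ fun u ⟨hu0, hut⟩ => ?_
  · rintro _ ⟨s, hs, rfl⟩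
    exact ⟨firstPassage_nonneg, firstPassage_mono hne hs.2⟩
  obtain rfl | hlt := hut.eq_or_lt
  · exact ⟨t, ⟨ht, le_rfl⟩, rfl⟩
  -- below the passage level, `g u` is a level whose passage time is exactly `u`
  have hgu : g u < t := lt_of_not_ge fun h => (firstPassage_le_of_le hg hu0 h).not_gt hlt
  have hgu0 : 0 ≤ g u := hg0 ▸ hg.monotoneOn self_mem_Ici hu0 hu0
  refine ⟨g u, ⟨hgu0, hgu.le⟩, le_antisymm (firstPassage_le_of_le hg hu0 le_rfl) ?_⟩
  refine le_firstPassage_of_le hg.monotoneOn ⟨u + 1, by linarith, ?_⟩ hu0 le_rfl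
  exact hg hu0 (by simp only [mem_Ici]; linarith) (by linarith)

lemma runningSup_comp_firstPassage (b : ℝ → ℝ) (hg0 : g 0 = 0) (hg : StrictMonoOn g (Ici 0))
    (hne : ∃ τ, 0 < τ ∧ t < g τ) (ht : 0 ≤ t) :
    runningSup (b ∘ firstPassage g) t = runningSup b (firstPassage g t) := by
  rw [runningSup, image_comp, firstPassage_image_Icc hg0 hg hne ht, runningSup]

lemma apply_firstPassage_eq_firstPassage_comp {h : ℝ → ℝ} (hg : StrictMonoOn g (Ici 0))
    (hg_rc : ∀ τ ∈ Ici 0, ContinuousWithinAt g (Ici τ) τ)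
    (hne : ∃ τ, 0 < τ ∧ t < g τ) (hh0 : h 0 = 0) (hh : MonotoneOn h (Ici 0))
    (hhc : Continuous h) (hh_unbdd : ∀ s, ∃ σ, 0 < σ ∧ s < h σ) :
    h (firstPassage g t) = firstPassage (g ∘ firstPassage h) t := by
  set m := h (firstPassage g t)
  have hm0 : 0 ≤ m := hh0 ▸ hh self_mem_Ici firstPassage_nonneg firstPassage_nonneg
  have hle : ∀ τ, 0 < τ → t < g (firstPassage h τ) → m ≤ τ := fun τ hτ hgτ => by
    have hS : firstPassage g t ≤ firstPassage h τ :=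
      firstPassage_le_of_le hg firstPassage_nonneg hgτ.le
    exact le_of_not_gt fun hτm =>
      (firstPassage_lt_of_lt hhc.continuousAt (by rw [hh0]; exact hτ.le)
        firstPassage_nonneg hτm).not_ge hS
  have hmem : ∀ τ, m < τ → t < g (firstPassage h τ) := fun τ hτ => by
    -- `h` stays below `τ` a little beyond the passage time of `g`, by continuity
    have hbelow : ∀ᶠ σ in 𝓝[>] firstPassage g t, h σ < τ :=
      ((hhc.tendsto _).eventually (gt_mem_nhds hτ)).filter_mono nhdsWithin_le_nhds
    obtain ⟨σ, hσh, hσ⟩ := (hbelow.and self_mem_nhdsWithin).exists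
    have hσ0 : 0 ≤ σ := firstPassage_nonneg.trans hσ.le
    have hlt : firstPassage g t < firstPassage h τ :=
      hσ.trans_le (le_firstPassage_of_le hh (hh_unbdd τ) hσ0 hσh.le)
    exact (le_apply_firstPassage hg_rc hne).trans_lt
      (hg firstPassage_nonneg firstPassage_nonneg hlt)
  refine (csInf_eq_of_forall_ge_of_forall_gt_exists_lt
    (s := {τ | 0 < τ ∧ t < (g ∘ firstPassage h) τ}) ⟨m + 1, by linarith, hmem _ (by linarith)⟩
    (fun τ hτ => hle τ hτ.1 hτ.2) fun w hw => ?_).symm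
  exact ⟨(m + w) / 2, ⟨by linarith, hmem _ (by linarith)⟩, by linarith⟩

end Inversion

section RunningSup

variable {b : ℝ → ℝ} {σ : ℝ}

lemma le_runningSup (hb : Continuous b) {s : ℝ} (hs : s ∈ Icc 0 σ) : b s ≤ runningSup b σ :=
  le_csSup (isCompact_Icc.bddAbove_image hb.continuousOn) (mem_image_of_mem b hs)

lemma runningSup_zero : runningSup b 0 = b 0 := by
  rw [runningSup, Icc_self, image_singleton, csSup_singleton]

lemma monotoneOn_runningSup (hb : Continuous b) : MonotoneOn (runningSup b) (Ici 0) :=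
  fun _ hσ _ _ hστ => csSup_le_csSup (isCompact_Icc.bddAbove_image hb.continuousOn)
    ⟨b 0, mem_image_of_mem b ⟨le_rfl, hσ⟩⟩ (image_mono (Icc_subset_Icc_right hστ))

-- Rescaling `Icc 0 σ` to `Icc 0 1` puts the running supremum in the form `sSup (f σ '' K)`.
lemma continuous_runningSup (hb : Continuous b) (hb0 : b 0 = 0) : Continuous (runningSup b) := by
  have hK : runningSup b = fun σ => sSup ((fun u => b (max σ 0 * u)) '' Icc 0 1) := by
    funext σ
    show sSup (b '' Icc 0 σ) = sSup ((b ∘ (max σ 0 * ·)) '' Icc 0 1)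
    rw [image_comp, image_mul_left_Icc (le_max_right σ 0) zero_le_one, mul_zero, mul_one]
    rcases lt_or_ge σ 0 with hσ | hσ
    · rw [max_eq_right hσ.le, Icc_eq_empty_of_lt hσ, Icc_self, image_empty, image_singleton, hb0,
        csSup_singleton, Real.sSup_empty]
    · rw [max_eq_left hσ]
  rw [hK]
  exact isCompact_Icc.continuous_sSup (by fun_prop)

lemma exists_lt_runningSup (hb : Continuous b) (h : ¬BddAbove (range fun n : ℕ => b n))
    (s : ℝ) : ∃ σ, 0 < σ ∧ s < runningSup b σ := by
  obtain ⟨_, ⟨n, rfl⟩, hn⟩ := not_bddAbove_iff.1 h (max s (b 0))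
  have hn0 : n ≠ 0 := by rintro rfl; simp at hn
  exact ⟨n, by positivity, (le_max_left _ _).trans_lt
    (hn.trans_le (le_runningSup hb ⟨n.cast_nonneg, le_rfl⟩))⟩

end RunningSup

section LevyExponent

variable {ν : Measure ℝ}

lemma one_sub_exp_neg_mul_le {u x : ℝ} (hx : 0 ≤ x) :
    1 - Real.exp (-u * x) ≤ max 1 u * min 1 x := by
  have h1 : 1 - Real.exp (-u * x) ≤ 1 := by linarith [Real.exp_pos (-u * x)]
  have h2 : 1 - Real.exp (-u * x) ≤ u * x := by linarith [Real.add_one_le_exp (-u * x)]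
  rcases le_total x 1 with hx1 | hx1
  · rw [min_eq_right hx1]; nlinarith [le_max_right 1 u]
  · rw [min_eq_left hx1, mul_one]; exact h1.trans (le_max_left 1 u)

lemma one_sub_exp_neg_mul_nonneg {u x : ℝ} (hu : 0 ≤ u) (hx : 0 ≤ x) :
    0 ≤ 1 - Real.exp (-u * x) := by
  rw [sub_nonneg, Real.exp_le_one_iff]; nlinarith

lemma IsLevyMeasure.integrableOn_one_sub_exp (hν : IsLevyMeasure ν) {u : ℝ} (hu : 0 ≤ u) :
    IntegrableOn (fun x => 1 - Real.exp (-u * x)) (Ioi 0) ν := by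
  have hmin : IntegrableOn (fun x : ℝ => min 1 x) (Ioi 0) ν :=
    ⟨by fun_prop, (hasFiniteIntegral_iff_ofReal (ae_restrict_of_forall_mem measurableSet_Ioi
      fun x (hx : 0 < x) => le_min zero_le_one hx.le)).2 (lt_top_iff_ne_top.2 hν.2.2)⟩
  refine (hmin.const_mul (max 1 u)).mono' (by fun_prop) ?_
  refine ae_restrict_of_forall_mem measurableSet_Ioi fun x (hx : 0 < x) => ?_
  rw [Real.norm_of_nonneg (one_sub_exp_neg_mul_nonneg hu hx.le)]
  exact one_sub_exp_neg_mul_le hx.le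

-- On `{x > 0 | u x > 1}` the integrand `1 - exp (-u x)` is at least `1 - e⁻¹`.
lemma IsLevyMeasure.mul_measure_le_levyExponent (hν : IsLevyMeasure ν) {u : ℝ} (hu : 0 ≤ u) :
    ENNReal.ofReal (1 - Real.exp (-1)) * ν {x | 0 < x ∧ 1 < u * x} ≤
      ENNReal.ofReal (levyExponent ν u) := by
  rw [levyExponent, ofReal_integral_eq_lintegral_ofReal (hν.integrableOn_one_sub_exp hu)
    (ae_restrict_of_forall_mem measurableSet_Ioi fun x (hx : 0 < x) =>
      one_sub_exp_neg_mul_nonneg hu hx.le), ← setLIntegral_const]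
  calc ∫⁻ _ in {x | 0 < x ∧ 1 < u * x}, ENNReal.ofReal (1 - Real.exp (-1)) ∂ν
      ≤ ∫⁻ x in {x | 0 < x ∧ 1 < u * x}, ENNReal.ofReal (1 - Real.exp (-u * x)) ∂ν := by
        refine setLIntegral_mono' ((measurableSet_Ioi).inter
          (measurableSet_lt measurable_const (measurable_id.const_mul u))) fun x hx => ?_
        gcongr
        linarith [hx.2]
    _ ≤ ∫⁻ x in Ioi 0, ENNReal.ofReal (1 - Real.exp (-u * x)) ∂ν :=
        lintegral_mono_set fun x hx => hx.1

lemma IsLevyMeasure.tendsto_levyExponent_atTop (hν : IsLevyMeasure ν) :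
    Tendsto (levyExponent ν) atTop atTop := by
  have hmono : Monotone fun u : ℝ => {x : ℝ | 0 < x ∧ 1 < u * x} :=
    fun u v huv x hx => ⟨hx.1, hx.2.trans_le (mul_le_mul_of_nonneg_right huv hx.1.le)⟩
  have hunion : ⋃ u : ℝ, {x : ℝ | 0 < x ∧ 1 < u * x} = Ioi 0 := by
    refine Subset.antisymm (iUnion_subset fun u x hx => hx.1) fun x (hx : 0 < x) => ?_
    exact mem_iUnion.2 ⟨2 / x, hx, by rw [div_mul_cancel₀ _ hx.ne']; norm_num⟩
  have hmeas : Tendsto (fun u => ν {x : ℝ | 0 < x ∧ 1 < u * x}) atTop (𝓝 ⊤) := by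
    have := tendsto_measure_iUnion_atTop (μ := ν) hmono
    rwa [hunion, hν.2.1] at this
  have hc : ENNReal.ofReal (1 - Real.exp (-1)) ≠ 0 := by
    rw [ENNReal.ofReal_ne_zero_iff, sub_pos, Real.exp_lt_one_iff]; norm_num
  rw [← ENNReal.tendsto_ofReal_nhds_top]
  have hlower := ENNReal.Tendsto.const_mul hmeas
    (Or.inr (ENNReal.ofReal_ne_top (r := 1 - Real.exp (-1))))
  rw [ENNReal.mul_top hc] at hlower
  refine tendsto_nhds_top_mono hlower ?_
  filter_upwards [eventually_ge_atTop 0] with u hu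
  exact hν.mul_measure_le_levyExponent hu

end LevyExponent

section Subordinator

variable {Ω : Type*} [MeasurableSpace Ω] {P : Measure Ω} {T : ℝ → Ω → ℝ} {f : ℝ → ℝ}

lemma measure_eq_zero_of_measureReal_le_tendsto_zero [IsFiniteMeasure P] {ι : Type*}
    {l : Filter ι} [l.NeBot] {c : ι → ℝ} {s : Set Ω} (hc : Tendsto c l (𝓝 0))
    (h : ∀ᶠ i in l, P.real s ≤ c i) : P s = 0 :=
  (measureReal_eq_zero_iff).1 (le_antisymm (ge_of_tendsto hc h) measureReal_nonneg)

lemma HasLaplaceExponent.measureReal_le_le [IsFiniteMeasure P] (hLap : HasLaplaceExponent P T f)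
    {r u : ℝ} (hr : 0 ≤ r) (hu : 0 < u) (a : ℝ) :
    P.real {ω | T r ω ≤ a} ≤ Real.exp (u * a - r * f u) := by
  have hmgf : mgf (T r) P (-u) = Real.exp (-r * f u) := hLap r hr u hu
  have hint : Integrable (fun ω => Real.exp (-u * T r ω)) P :=
    Integrable.of_integral_ne_zero ((hLap r hr u hu).trans_ne (Real.exp_pos _).ne')
  calc P.real {ω | T r ω ≤ a} ≤ Real.exp (- -u * a) * mgf (T r) P (-u) :=
        measure_le_le_exp_mul_mgf a (by linarith) hint
    _ = Real.exp (u * a - r * f u) := by rw [hmgf, ← Real.exp_add]; ring_nf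

lemma HasLaplaceExponent.ae_pos [IsFiniteMeasure P] (hLap : HasLaplaceExponent P T f)
    (hf : Tendsto f atTop atTop) {r : ℝ} (hr : 0 < r) : ∀ᵐ ω ∂P, 0 < T r ω := by
  simp_rw [ae_iff, not_lt]
  refine measure_eq_zero_of_measureReal_le_tendsto_zero (l := atTop)
    (c := fun u => Real.exp (u * 0 - r * f u)) ?_ ?_
  · simp_rw [mul_zero, zero_sub]
    exact Real.tendsto_exp_atBot.comp (tendsto_neg_atTop_atBot.comp (hf.const_mul_atTop hr))
  · filter_upwards [eventually_gt_atTop 0] with u hu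
    exact hLap.measureReal_le_le hr.le hu 0

lemma HasLaplaceExponent.ae_exists_lt [IsFiniteMeasure P] (hLap : HasLaplaceExponent P T f)
    (hf : Tendsto f atTop atTop) (a : ℝ) : ∀ᵐ ω ∂P, ∃ τ, 0 < τ ∧ a < T τ ω := by
  obtain ⟨u, hu, hfu⟩ := ((eventually_gt_atTop 0).and (hf.eventually_gt_atTop 0)).exists
  simp_rw [ae_iff, not_exists, not_and, not_lt]
  refine measure_eq_zero_of_measureReal_le_tendsto_zero (l := atTop)
    (c := fun r => Real.exp (u * a - r * f u)) ?_ ?_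
  · have hlin : Tendsto (fun r => u * a - r * f u) atTop atBot := by
      simpa only [sub_eq_add_neg, Function.comp_def, id] using tendsto_atBot_add_const_left
        atTop (u * a) (tendsto_neg_atTop_atBot.comp (tendsto_id.atTop_mul_const hfu))
    exact Real.tendsto_exp_atBot.comp hlin
  · filter_upwards [eventually_gt_atTop 0] with r hr
    exact (measureReal_mono (s₂ := {ω | T r ω ≤ a})
      fun ω (hω : ∀ τ, 0 < τ → T τ ω ≤ a) => hω r hr).trans (hLap.measureReal_le_le hr.le hu a)

lemma IsSubordinatorProc.ae_lt (hT : IsSubordinatorProc P T)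
    (hpos : ∀ r, 0 < r → ∀ᵐ ω ∂P, 0 < T r ω) {q r : ℝ} (hq : 0 ≤ q) (hqr : q < r) :
    ∀ᵐ ω ∂P, T q ω < T r ω := by
  have hlaw := hT.statInc q (r - q) hq (sub_nonneg.2 hqr.le)
  rw [add_sub_cancel] at hlaw
  have hinc : ∀ᵐ x ∂P.map (T (r - q)), 0 < x :=
    (ae_map_iff (hT.meas _).aemeasurable measurableSet_Ioi).2 (hpos _ (sub_pos.2 hqr))
  have hmeas : Measurable fun ω => T r ω - T q ω := (hT.meas r).sub (hT.meas q)
  rw [← hlaw, ae_map_iff hmeas.aemeasurable measurableSet_Ioi] at hinc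
  filter_upwards [hinc] with ω hω using sub_pos.1 hω

lemma IsSubordinatorProc.ae_strictMonoOn (hT : IsSubordinatorProc P T)
    (hpos : ∀ r, 0 < r → ∀ᵐ ω ∂P, 0 < T r ω) :
    ∀ᵐ ω ∂P, StrictMonoOn (fun τ => T τ ω) (Ici 0) := by
  have hrat : ∀ᵐ ω ∂P, ∀ p : ℚ × ℚ, 0 ≤ p.1 → p.1 < p.2 → T p.1 ω < T p.2 ω :=
    ae_all_iff.2 fun p => by
      by_cases hp : 0 ≤ p.1 ∧ p.1 < p.2
      · filter_upwards [hT.ae_lt hpos (q := p.1) (r := p.2) (by exact_mod_cast hp.1)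
          (by exact_mod_cast hp.2)] with ω hω using fun _ _ => hω
      · exact ae_of_all _ fun ω h1 h2 => (hp ⟨h1, h2⟩).elim
  filter_upwards [hrat, hT.mono] with ω hω hmono a ha b hb hab
  obtain ⟨q, haq, hqb⟩ := exists_rat_btwn hab
  obtain ⟨r, hqr, hrb⟩ := exists_rat_btwn hqb
  have hq : (0 : ℝ) ≤ q := (mem_Ici.1 ha).trans haq.le
  calc T a ω ≤ T q ω := hmono ha hq haq.le
    _ < T r ω := hω (q, r) (by exact_mod_cast hq) (by exact_mod_cast hqr)
    _ ≤ T b ω := hmono (mem_Ici.2 (hq.trans hqr.le)) hb hrb.le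

end Subordinator

lemma bddAbove_range_add_sub_iff (x : ℕ → ℝ) (k : ℕ) :
    BddAbove (range fun n => x (k + n) - x k) ↔ BddAbove (range x) := by
  constructor
  · rintro ⟨M, hM⟩
    have htail : BddAbove (range fun n => x (k + n)) :=
      ⟨M + x k, by rintro _ ⟨n, rfl⟩; linarith [hM ⟨n, rfl⟩]⟩
    refine (((finite_Iio k).image x).bddAbove.union htail).mono ?_
    rintro _ ⟨n, rfl⟩
    rcases lt_or_ge n k with hnk | hkn
    · exact Or.inl ⟨n, hnk, rfl⟩
    · exact Or.inr ⟨n - k, by simp only [Nat.add_sub_cancel' hkn]⟩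
  · rintro ⟨M, hM⟩
    exact ⟨M - x k, by rintro _ ⟨n, rfl⟩; linarith [hM ⟨k + n, rfl⟩]⟩

section RandomWalk

variable {Ω : Type*} [MeasurableSpace Ω] {P : Measure Ω}

-- Kolmogorov's 0-1 law: dropping the first `k` steps only shifts the walk by a constant.
lemma measure_not_bddAbove_partialSums_eq_zero_or_one [IsProbabilityMeasure P]
    {Y : ℕ → Ω → ℝ} (hY : ∀ i, Measurable (Y i)) (hind : iIndepFun Y P) :
    P {ω | ¬BddAbove (range fun n => ∑ i ∈ Finset.range n, Y i ω)} = 0 ∨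
      P {ω | ¬BddAbove (range fun n => ∑ i ∈ Finset.range n, Y i ω)} = 1 := by
  refine measure_zero_or_one_of_measurableSet_limsup_atTop (fun i => (hY i).comap_le)
    hind.iIndep ?_
  rw [limsup_eq_iInf_iSup_of_nat, MeasurableSpace.measurableSet_iInf]
  intro k
  have hshift : {ω | ¬BddAbove (range fun n => ∑ i ∈ Finset.range n, Y i ω)} =
      {ω | ¬BddAbove (range fun n => ∑ i ∈ Finset.range n, Y (k + i) ω)} := by
    ext ω
    rw [mem_ofPred_eq, mem_ofPred_eq,
      ← bddAbove_range_add_sub_iff (fun n => ∑ i ∈ Finset.range n, Y i ω) k]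
    simp only [Finset.sum_range_add_sub_sum_range]
  rw [hshift]
  refine (measurableSet_bddAbove_range fun n => ?_).compl
  exact Finset.measurable_sum _ fun i _ => (comap_measurable (Y (k + i))).mono
    (le_iSup₂ (f := fun j (_ : j ≥ k) => MeasurableSpace.comap (Y j) _) (k + i)
      (Nat.le_add_right k i)) le_rfl

lemma le_measure_setOf_not_bddAbove_range [IsFiniteMeasure P] {X : ℕ → Ω → ℝ}
    (hX : ∀ n, Measurable (X n)) {c : ℝ≥0∞} (h : ∀ M : ℝ, ∃ n, c ≤ P {ω | M < X n ω}) :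
    c ≤ P {ω | ¬BddAbove (range fun n => X n ω)} := by
  have hset : {ω | ¬BddAbove (range fun n => X n ω)} = ⋂ M : ℕ, ⋃ n, {ω | (M : ℝ) < X n ω} := by
    ext ω
    simp only [mem_ofPred_eq, not_bddAbove_iff, mem_iInter, mem_iUnion, exists_range_iff]
    exact ⟨fun h M => h M, fun h M => (h ⌈M⌉₊).imp fun n hn => (Nat.le_ceil M).trans_lt hn⟩
  have hanti : Antitone fun M : ℕ => ⋃ n, {ω | (M : ℝ) < X n ω} := fun M N hMN =>
    iUnion_mono fun n ω (hω : (N : ℝ) < X n ω) => (Nat.cast_le.2 hMN).trans_lt hω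
  rw [hset, hanti.measure_iInter (fun M => (MeasurableSet.iUnion fun n =>
    measurableSet_lt measurable_const (hX n)).nullMeasurableSet) ⟨0, measure_ne_top _ _⟩]
  refine le_iInf fun M => ?_
  obtain ⟨n, hn⟩ := h M
  exact hn.trans (measure_mono (subset_iUnion (fun n => {ω | (M : ℝ) < X n ω}) n))

end RandomWalk

lemma gaussianReal_Ioi_one_pos : 0 < gaussianReal 0 1 (Ioi 1) := by
  refine pos_iff_ne_zero.2 fun h => ?_
  have := gaussianReal_absolutelyContinuous' 0 one_ne_zero h
  simp at this

lemma gaussianReal_Ioi_one_le {v : ℝ≥0} {M : ℝ} (hM : M < √v) :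
    gaussianReal 0 1 (Ioi 1) ≤ gaussianReal 0 v (Ioi M) := by
  have hscale : gaussianReal 0 v = (gaussianReal 0 1).map (√v * ·) := by
    rw [gaussianReal_map_const_mul, mul_zero, mul_one]
    congr
    ext
    simp
  rw [hscale, Measure.map_apply (measurable_const_mul _) measurableSet_Ioi]
  refine measure_mono fun x (hx : 1 < x) => ?_
  show M < √v * x
  nlinarith [Real.sqrt_nonneg v]

section Brownian

variable {Ω : Type*} [MeasurableSpace Ω] {P : Measure Ω} {B : ℝ → Ω → ℝ}

lemma IsBrownianMotion.iIndepFun_unit_increments (hB : IsBrownianMotion P B) :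
    iIndepFun (fun (i : ℕ) ω => B ((i + 1 : ℕ) : ℝ) ω - B i ω) P := by
  rw [iIndepFun_iff_finset]
  intro s
  obtain ⟨n, hn⟩ := s.exists_nat_subset_range
  exact (hB.indepInc n Nat.cast Nat.mono_cast fun _ => Nat.cast_nonneg _).precomp
    (g := fun i : s => (⟨i, Finset.mem_range.1 (hn i.2)⟩ : Fin n))
    fun i j hij => Subtype.ext (congrArg Fin.val hij)

lemma IsBrownianMotion.ae_not_bddAbove_range [IsProbabilityMeasure P]
    (hB : IsBrownianMotion P B) :
    ∀ᵐ ω ∂P, ¬BddAbove (range fun n : ℕ => B n ω) := by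
  have hsum : ∀ n : ℕ, ∀ ω, ∑ i ∈ Finset.range n, (B ((i + 1 : ℕ) : ℝ) ω - B i ω) =
      B n ω - B 0 ω := fun n ω => by
    rw [Finset.sum_range_sub (fun i : ℕ => B i ω), Nat.cast_zero]
  have h01 := measure_not_bddAbove_partialSums_eq_zero_or_one
    (Y := fun i ω => B ((i + 1 : ℕ) : ℝ) ω - B i ω) (fun i => (hB.meas _).sub (hB.meas _))
    hB.iIndepFun_unit_increments
  simp only [hsum] at h01
  have hX : ∀ n : ℕ, Measurable fun ω => B n ω - B 0 ω := fun n => (hB.meas _).sub (hB.meas _)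
  have hpos : P {ω | ¬BddAbove (range fun n : ℕ => B n ω - B 0 ω)} ≠ 0 := by
    refine (gaussianReal_Ioi_one_pos.trans_le
      (le_measure_setOf_not_bddAbove_range hX fun M => ?_)).ne'
    obtain ⟨n, hn⟩ := exists_nat_gt (M ^ 2)
    refine ⟨n, (gaussianReal_Ioi_one_le (v := Real.toNNReal ((n : ℝ) - 0)) (M := M) ?_).trans_eq
      ?_⟩
    · rw [sub_zero, Real.coe_toNNReal _ n.cast_nonneg]
      exact Real.lt_sqrt_of_sq_lt hn
    · rw [← hB.gaussInc 0 n le_rfl n.cast_nonneg,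
        Measure.map_apply (hX n) measurableSet_Ioi]
      rfl
  have hae : ∀ᵐ ω ∂P, ¬BddAbove (range fun n : ℕ => B n ω - B 0 ω) := by
    rw [ae_iff_measure_eq (p := fun ω => ¬BddAbove (range fun n : ℕ => B n ω - B 0 ω))
      (measurableSet_bddAbove_range hX).compl.nullMeasurableSet, measure_univ]
    exact h01.resolve_left hpos
  filter_upwards [hae, hB.start] with ω hω h0
  simpa only [h0, sub_zero] using hω

end Brownian

theorem delayedBM_running_sup_as_inverse_general
    {Ω : Type*} [mΩ : MeasurableSpace Ω] (P : Measure Ω) [IsProbabilityMeasure P]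
    (B T : ℝ → Ω → ℝ) (ν : Measure ℝ)
    (hB : IsBrownianMotion P B) (hT : IsSubordinatorProc P T)
    (hν : IsLevyMeasure ν)
    (hLap : HasLaplaceExponent P T (levyExponent ν)) :
    ∀ t : ℝ, 0 ≤ t → ∀ᵐ ω ∂P,
      runSup (fun s ω' => B (invSub T s ω') ω') t ω =
          invSub (fun τ ω' => T (invSub (runSup B) τ ω') ω') t ω ∧
        runSup (fun s ω' => B (invSub T s ω') ω') t ω = runSup B (invSub T t ω) ω := by
  intro t ht
  have hf := hν.tendsto_levyExponent_atTop
  filter_upwards [hT.start, hT.ae_strictMonoOn fun r hr => hLap.ae_pos hf hr, hT.rightCont,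
    hLap.ae_exists_lt hf t, hB.start, hB.cont, hB.ae_not_bddAbove_range]
    with ω hT0 hTmono hTrc hTt hB0 hBc hBunbdd
  have hX : runningSup ((B · ω) ∘ firstPassage (T · ω)) t =
      runningSup (B · ω) (firstPassage (T · ω) t) :=
    runningSup_comp_firstPassage _ hT0 hTmono hTt ht
  refine ⟨hX.trans (apply_firstPassage_eq_firstPassage_comp hTmono hTrc hTt ?_
    (monotoneOn_runningSup hBc) (continuous_runningSup hBc hB0)
    (exists_lt_runningSup hBc hBunbdd)), hX⟩
  rw [runningSup_zero, hB0]

/-- Let `X*(t) = sup_{s ∈ [0,t]} X(s)` be the running supremum of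
`X(t) = B(S(t))` and `S_{1/2}(t) = inf{τ > 0 : B*(τ) > t}`.  Then for every `t ≥ 0`,
almost surely `X*(t) = inf{τ > 0 : T(S_{1/2}(τ)) > t}`: the running supremum of `X` is the
inverse of the subordinator `T ∘ S_{1/2}`.  (Moreover `X*(t) = B*(S(t))`.) -/
theorem delayedBM_running_sup_as_inverse
    {Ω : Type*} [mΩ : MeasurableSpace Ω] (P : Measure Ω) [IsProbabilityMeasure P]
    (B T : ℝ → Ω → ℝ) (ν : Measure ℝ)
    (hB : IsBrownianMotion P B) (hT : IsSubordinatorProc P T)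
    (hν : IsLevyMeasure ν)
    (hLap : HasLaplaceExponent P T (levyExponent ν))
    (hInd : IndepFun (fun ω (t : ℝ) => B t ω) (fun ω (t : ℝ) => T t ω) P) :
    ∀ t : ℝ, 0 ≤ t → ∀ᵐ ω ∂P,
      runSup (fun s ω' => B (invSub T s ω') ω') t ω =
          invSub (fun τ ω' => T (invSub (runSup B) τ ω') ω') t ω ∧
        runSup (fun s ω' => B (invSub T s ω') ω') t ω = runSup B (invSub T t ω) ω :=
  delayedBM_running_sup_as_inverse_general (mΩ := mΩ) P B T ν hB hT hν hLap
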